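/- arXiv:2310.19244 — 4 statements merged into one kernel-verified Lean document; each statement's English description precedes it below -/
import Mathlib

section
/- (Incoherence implies a restricted eigenvalue bound.) Fix a positive integer k ≤ d and let 𝕏 be an n×d matrix satisfying the incoherence condition INC(k): every entry of the matrix 𝕏ᵀ𝕏/n − I_d has absolute value at most 1/(32k). Then for any subset S ⊂ {1,…,d} with |S| ≤ k and any θ ∈ ℝ^d satisfying the cone condition |θ_{S^c}|₁ ≤ 3|θ_S|₁, it holds that |θ|₂² ≤ 2|𝕏θ|₂²/n. -/
/-!
Write `AᵀA/n = I + E` with `|E|_∞ ≤ ε = 1/(32k)`. Then `|Aθ|₂²/n = |θ|₂² + θᵀEθ` and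
`|θᵀEθ| ≤ ε|θ|₁²`. Under the cone condition `|θ|₁ ≤ 4|θ_S|₁ ≤ 4√k |θ|₂`, so the error
is at most `16kε|θ|₂² = |θ|₂²/2`.
-/

open Matrix Finset

section
variable {ι : Type*} [Fintype ι]

theorem abs_dotProduct_mulVec_le (M : Matrix ι ι ℝ) {ε : ℝ} (hM : ∀ i j, |M i j| ≤ ε)
    (θ : ι → ℝ) : |θ ⬝ᵥ (M *ᵥ θ)| ≤ ε * (∑ i, |θ i|) ^ 2 :=
  calc |θ ⬝ᵥ (M *ᵥ θ)| = |∑ i, ∑ j, θ i * M i j * θ j| := by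
        simp only [dotProduct, mulVec, mul_sum, mul_assoc]
    _ ≤ ∑ i, ∑ j, |θ i * M i j * θ j| :=
        (abs_sum_le_sum_abs _ _).trans (sum_le_sum fun i _ => abs_sum_le_sum_abs _ _)
    _ ≤ ∑ i, ∑ j, ε * (|θ i| * |θ j|) := by
        gcongr with i _ j _
        rw [abs_mul, abs_mul, mul_comm ε, mul_right_comm]
        gcongr
        exact hM i j
    _ = ε * (∑ i, |θ i|) ^ 2 := by rw [sq, sum_mul_sum]; simp only [mul_sum]

theorem dotProduct_self_sub_le_dotProduct_mulVec [DecidableEq ι] (G : Matrix ι ι ℝ) {ε : ℝ}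
    (hG : ∀ i j, |G i j - (1 : Matrix ι ι ℝ) i j| ≤ ε) (θ : ι → ℝ) :
    θ ⬝ᵥ θ - ε * (∑ i, |θ i|) ^ 2 ≤ θ ⬝ᵥ (G *ᵥ θ) := by
  have hsplit : θ ⬝ᵥ (G *ᵥ θ) = θ ⬝ᵥ θ + θ ⬝ᵥ ((G - 1) *ᵥ θ) := by
    rw [sub_mulVec, one_mulVec, dotProduct_sub]; ring
  have := abs_le.mp (abs_dotProduct_mulVec_le (G - 1) hG θ)
  linarith [this.1]

theorem sq_sum_abs_le_of_cone [DecidableEq ι] (S : Finset ι) (θ : ι → ℝ)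
    (hcone : ∑ i ∈ Sᶜ, |θ i| ≤ 3 * ∑ i ∈ S, |θ i|) :
    (∑ i, |θ i|) ^ 2 ≤ 16 * #S * θ ⬝ᵥ θ := by
  have hl1 : ∑ i, |θ i| ≤ 4 * ∑ i ∈ S, |θ i| := by
    linarith [sum_add_sum_compl S fun i => |θ i|]
  have hS : (∑ i ∈ S, |θ i|) ^ 2 ≤ #S * θ ⬝ᵥ θ :=
    calc (∑ i ∈ S, |θ i|) ^ 2 ≤ #S * ∑ i ∈ S, |θ i| ^ 2 := sq_sum_le_card_mul_sum_sq
      _ ≤ #S * θ ⬝ᵥ θ := by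
        gcongr
        simp only [sq_abs, dotProduct, ← sq]
        exact sum_le_sum_of_subset_of_nonneg (subset_univ S) fun i _ _ => sq_nonneg _
  have h0 : 0 ≤ ∑ i, |θ i| := by positivity
  nlinarith
end

theorem sum_mulVec_sq {m n : Type*} [Fintype m] [Fintype n] (A : Matrix m n ℝ) (θ : n → ℝ) :
    ∑ i, (A *ᵥ θ) i ^ 2 = θ ⬝ᵥ ((Aᵀ * A) *ᵥ θ) := by
  rw [← mulVec_mulVec, dotProduct_mulVec, vecMul_transpose]
  simp only [dotProduct, sq]

theorem incoherence_restricted_eigenvalue_general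
    {n d k : ℕ}
    (A : Matrix (Fin n) (Fin d) ℝ)
    (hinc : ∀ a b, |(Aᵀ * A) a b / n - (1 : Matrix (Fin d) (Fin d) ℝ) a b| ≤
      1 / (32 * k))
    (S : Finset (Fin d)) (hS : S.card ≤ k)
    (θ : Fin d → ℝ)
    (hcone : ∑ j ∈ Sᶜ, |θ j| ≤ 3 * ∑ j ∈ S, |θ j|) :
    ∑ j, θ j ^ 2 ≤ 2 * (∑ i, (A.mulVec θ i) ^ 2) / n := by
  set ε : ℝ := 1 / (32 * k)
  have hG : ∀ a b, |((n : ℝ)⁻¹ • (Aᵀ * A)) a b - (1 : Matrix (Fin d) (Fin d) ℝ) a b| ≤ ε := by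
    simpa only [Matrix.smul_apply, smul_eq_mul, inv_mul_eq_div] using hinc
  have hquad := dotProduct_self_sub_le_dotProduct_mulVec _ hG θ
  rw [smul_mulVec, dotProduct_smul, ← sum_mulVec_sq, smul_eq_mul, inv_mul_eq_div] at hquad
  have hl1 := sq_sum_abs_le_of_cone S θ hcone
  -- equality for `k > 0`; for `k = 0`, `ε = 1 / 0 = 0`
  have hkε : k * ε ≤ 1 / 32 := by
    rcases k.eq_zero_or_pos with rfl | hk
    · norm_num [ε]
    · rw [mul_one_div, div_mul_eq_div_div_swap, div_self (by positivity)]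
  have hT : 0 ≤ θ ⬝ᵥ θ := dotProduct_self_star_nonneg θ
  have hSk : (#S : ℝ) ≤ k := by exact_mod_cast hS
  have hε : 0 ≤ ε := by positivity
  simp only [dotProduct, ← sq] at hquad hl1 hT ⊢
  rw [mul_div_assoc]
  nlinarith [mul_le_mul_of_nonneg_left hl1 hε, mul_le_mul_of_nonneg_right hSk hT]

/-- Incoherence implies a restricted eigenvalue bound: if `|AᵀA/n − I|_∞ ≤ 1/(32k)`,
then for any `S` with `|S| ≤ k` and any `θ` satisfying the cone condition
`|θ_{Sᶜ}|₁ ≤ 3|θ_S|₁`, one has `|θ|₂² ≤ 2|Aθ|₂²/n`. -/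
theorem incoherence_restricted_eigenvalue
    {n d k : ℕ} (hn : 0 < n) (hk : 0 < k) (hkd : k ≤ d)
    (A : Matrix (Fin n) (Fin d) ℝ)
    (hinc : ∀ a b, |(Aᵀ * A) a b / n - (1 : Matrix (Fin d) (Fin d) ℝ) a b| ≤
      1 / (32 * k))
    (S : Finset (Fin d)) (hS : S.card ≤ k)
    (θ : Fin d → ℝ)
    (hcone : ∑ j ∈ Sᶜ, |θ j| ≤ 3 * ∑ j ∈ S, |θ j|) :
    ∑ j, θ j ^ 2 ≤ 2 * (∑ i, (A.mulVec θ i) ^ 2) / n :=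
  incoherence_restricted_eigenvalue_general A hinc S hS θ hcone
end

section
/- (Maurey's argument.) Let φ₁, …, φ_M ∈ ℝⁿ be vectors normalized so that max_{1≤j≤M} |φⱼ|₂ ≤ D√n, and for θ ∈ ℝ^M write φ_θ = Σⱼ θⱼ φⱼ. Then for any f ∈ ℝⁿ, any integer k with 1 ≤ k ≤ M and any R > 0: min over θ ∈ ℝ^M with |θ|₀ ≤ k of (1/n)|φ_θ − f|₂² is at most [min over θ ∈ ℝ^M with |θ|₁ ≤ R of (1/n)|φ_θ − f|₂²] + D²R²/k. -/
open Classical in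
/-- The number of nonzero coordinates (the "ℓ₀ norm") of a vector. -/
noncomputable def sparsity {M : ℕ} (θ : Fin M → ℝ) : ℕ :=
  (Finset.univ.filter fun j => θ j ≠ 0).card

/-!
Write `T = |θ|₁` and `p j = |θ j| / T`, so that `φ_θ = ∑ p j • x j` with `x j = T sign(θ j) φ j`
of norm at most `T D √n`. The mean of `k` independent draws from `x` under `p` is `k`-sparse and
lies at expected squared distance `‖φ_θ - f‖² + Var / k` from `f`, with `Var ≤ T² D² n`.
Derandomised, the draws are made one at a time so that the conditional expectation never
increases, which turns the probabilistic argument into an induction on `k`.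
-/

open Finset

section WeightedMean

variable {E ι : Type*} [NormedAddCommGroup E] [InnerProductSpace ℝ E] [Fintype ι]
  {p : ι → ℝ}

theorem sum_mul_norm_add_sq (hp : ∑ i, p i = 1) (u : ι → E) (w : E) :
    ∑ i, p i * ‖w + u i‖ ^ 2 =
      ‖w + ∑ i, p i • u i‖ ^ 2 + ∑ i, p i * ‖u i - ∑ j, p j • u j‖ ^ 2 := by
  set a := ∑ j, p j • u j
  have hcentered : ∑ i, p i • (u i - a) = 0 := by
    simp [smul_sub, sum_sub_distrib, ← sum_smul, hp, a]
  calc ∑ i, p i * ‖w + u i‖ ^ 2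
      = ∑ i, (p i * ‖w + a‖ ^ 2 + 2 * inner ℝ (w + a) (p i • (u i - a))
          + p i * ‖u i - a‖ ^ 2) := by
        refine sum_congr rfl fun i _ => ?_
        rw [show w + u i = (w + a) + (u i - a) by abel, norm_add_sq_real, inner_smul_right]
        ring
    _ = ‖w + a‖ ^ 2 + ∑ i, p i * ‖u i - a‖ ^ 2 := by
        rw [sum_add_distrib, sum_add_distrib, ← sum_mul, hp, ← mul_sum, ← inner_sum,
          hcentered, inner_zero_right]
        ring

theorem exists_le_sum_mul (hp₀ : ∀ i, 0 ≤ p i) (hp : ∑ i, p i = 1) (F : ι → ℝ) :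
    ∃ i, F i ≤ ∑ j, p j * F j := by
  have : (univ : Finset ι).Nonempty := nonempty_of_sum_ne_zero (hp ▸ one_ne_zero)
  obtain ⟨i, -, hi⟩ := exists_min_image univ F this
  refine ⟨i, ?_⟩
  calc F i = ∑ j, p j * F i := by rw [← sum_mul, hp, one_mul]
    _ ≤ ∑ j, p j * F j :=
        sum_le_sum fun j _ => mul_le_mul_of_nonneg_left (hi j (mem_univ j)) (hp₀ j)

/-- `‖s + t • a‖² + t V` is the expected value of `‖s + ∑ l, u (g l)‖²` for `t` independent
draws `g l` from `p`; a best next draw does not exceed it. -/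
theorem exists_norm_add_sum_sq_le (hp₀ : ∀ i, 0 ≤ p i) (hp : ∑ i, p i = 1) (u : ι → E)
    (t : ℕ) (s : E) :
    ∃ g : Fin t → ι, ‖s + ∑ l, u (g l)‖ ^ 2 ≤
      ‖s + (t : ℝ) • ∑ i, p i • u i‖ ^ 2 + t * ∑ i, p i * ‖u i - ∑ j, p j • u j‖ ^ 2 := by
  set a := ∑ j, p j • u j
  set V := ∑ i, p i * ‖u i - a‖ ^ 2
  induction t generalizing s with
  | zero => exact ⟨Fin.elim0, by simp⟩
  | succ t ih =>
    obtain ⟨j, hj⟩ := exists_le_sum_mul hp₀ hp fun j => ‖s + (t : ℝ) • a + u j‖ ^ 2 + t * V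
    obtain ⟨g, hg⟩ := ih (s + u j)
    refine ⟨Fin.cons j g, ?_⟩
    rw [Fin.sum_univ_succ]
    simp only [Fin.cons_zero, Fin.cons_succ]
    calc ‖s + (u j + ∑ l, u (g l))‖ ^ 2
      _ ≤ ‖s + (t : ℝ) • a + u j‖ ^ 2 + t * V := by
          rw [← add_assoc, add_right_comm s ((t : ℝ) • a) (u j)]
          exact hg
      _ ≤ ∑ i, p i * (‖s + (t : ℝ) • a + u i‖ ^ 2 + t * V) := hj
      _ = ‖s + ((t + 1 : ℕ) : ℝ) • a‖ ^ 2 + (t + 1 : ℕ) * V := by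
          have hvar : ∑ i, p i * ‖s + (t : ℝ) • a + u i‖ ^ 2 = ‖s + (t : ℝ) • a + a‖ ^ 2 + V :=
            sum_mul_norm_add_sq hp u _
          simp only [mul_add, sum_add_distrib, ← sum_mul, hp, one_mul, hvar]
          push_cast
          rw [add_smul, one_smul, ← add_assoc]
          ring

theorem exists_norm_inv_smul_sum_sub_sq_le (hp₀ : ∀ i, 0 ≤ p i) (hp : ∑ i, p i = 1)
    (x : ι → E) (c : E) {k : ℕ} (hk : k ≠ 0) :
    ∃ g : Fin k → ι, ‖(k : ℝ)⁻¹ • ∑ l, x (g l) - c‖ ^ 2 ≤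
      ‖∑ i, p i • x i - c‖ ^ 2 + (∑ i, p i * ‖x i‖ ^ 2) / k := by
  have hk' : (k : ℝ) ≠ 0 := Nat.cast_ne_zero.mpr hk
  set m := ∑ i, p i • x i
  set V := ∑ i, p i * ‖x i - m‖ ^ 2
  have hV : V ≤ ∑ i, p i * ‖x i‖ ^ 2 := by
    have h := sum_mul_norm_add_sq hp x 0
    simp only [zero_add] at h
    rw [h]
    exact le_add_of_nonneg_left (sq_nonneg _)
  obtain ⟨g, hg⟩ := exists_norm_add_sum_sq_le hp₀ hp x k (-((k : ℝ) • c))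
  refine ⟨g, ?_⟩
  have hscale (v : E) :
      ‖(k : ℝ)⁻¹ • (-((k : ℝ) • c) + v)‖ ^ 2 = ‖-((k : ℝ) • c) + v‖ ^ 2 / k ^ 2 := by
    rw [norm_smul, mul_pow, norm_inv, Real.norm_natCast]
    field_simp
  calc ‖(k : ℝ)⁻¹ • ∑ l, x (g l) - c‖ ^ 2
      = ‖-((k : ℝ) • c) + ∑ l, x (g l)‖ ^ 2 / k ^ 2 := by
        rw [← hscale, smul_add, smul_neg, inv_smul_smul₀ hk', neg_add_eq_sub]
    _ ≤ (‖-((k : ℝ) • c) + (k : ℝ) • m‖ ^ 2 + k * V) / k ^ 2 := by gcongr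
    _ = ‖m - c‖ ^ 2 + V / k := by
        rw [add_div, ← hscale, smul_add, smul_neg, inv_smul_smul₀ hk', inv_smul_smul₀ hk',
          neg_add_eq_sub]
        field_simp
    _ ≤ ‖m - c‖ ^ 2 + (∑ i, p i * ‖x i‖ ^ 2) / k := by gcongr

end WeightedMean

section Sparsification

variable {E : Type*} [NormedAddCommGroup E] [InnerProductSpace ℝ E] {M k : ℕ}

theorem sparsity_card_fiber_mul_le (g : Fin k → Fin M) (y : Fin M → ℝ) :
    sparsity (fun j => (#{l | g l = j} : ℝ) * y j) ≤ k := by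
  classical
  calc sparsity (fun j => (#{l | g l = j} : ℝ) * y j) ≤ #(univ.image g) := by
        unfold sparsity
        refine card_le_card fun j hj => ?_
        obtain ⟨l, hl⟩ : ∃ l, g l = j := by
          by_contra! h
          simp [h] at hj
        exact mem_image.mpr ⟨l, mem_univ l, hl⟩
    _ ≤ k := card_image_le.trans_eq (card_fin k)

theorem sum_card_fiber_mul_smul (g : Fin k → Fin M) (y : Fin M → ℝ) (φ : Fin M → E) :
    ∑ j, ((#{l | g l = j} : ℝ) * y j) • φ j = ∑ l, y (g l) • φ (g l) := by
  rw [← sum_fiberwise univ g]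
  refine sum_congr rfl fun j _ => ?_
  rw [mul_smul, Nat.cast_smul_eq_nsmul ℝ, ← sum_const]
  exact (sum_congr rfl fun l hl => by rw [(mem_filter.mp hl).2]).symm

theorem exists_sparsity_le_norm_sum_smul_sub_sq_le (hk : k ≠ 0) (φ : Fin M → E) {B : ℝ}
    (hφ : ∀ j, ‖φ j‖ ≤ B) (θ : Fin M → ℝ) (c : E) :
    ∃ θ' : Fin M → ℝ, sparsity θ' ≤ k ∧
      ‖∑ j, θ' j • φ j - c‖ ^ 2 ≤ ‖∑ j, θ j • φ j - c‖ ^ 2 + B ^ 2 * (∑ j, |θ j|) ^ 2 / k := by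
  set T := ∑ j, |θ j|
  rcases (sum_nonneg fun j _ => abs_nonneg (θ j) : 0 ≤ T).eq_or_lt with hT | hT
  · have hθ : θ = 0 := funext fun j =>
      abs_eq_zero.mp ((sum_eq_zero_iff_of_nonneg fun j _ => abs_nonneg _).mp hT.symm j (mem_univ j))
    refine ⟨θ, by simp [sparsity, hθ], le_add_of_nonneg_right (by positivity)⟩
  set p : Fin M → ℝ := fun j => |θ j| / T
  set x : Fin M → E := fun j => (T * SignType.sign (θ j)) • φ j
  have hp : ∑ j, p j = 1 := by rw [← sum_div, div_self hT.ne']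
  have hmean : ∑ j, p j • x j = ∑ j, θ j • φ j := by
    refine sum_congr rfl fun j _ => ?_
    rw [smul_smul]
    congr 1
    rw [div_mul_comm, mul_div_cancel_left₀ _ hT.ne', sign_mul_abs]
  have hx : ∀ j, ‖x j‖ ≤ T * B := by
    intro j
    rw [norm_smul, Real.norm_eq_abs, abs_mul, abs_of_pos hT]
    have hsign : |(SignType.sign (θ j) : ℝ)| ≤ 1 := by cases SignType.sign (θ j) <;> simp
    calc T * |(SignType.sign (θ j) : ℝ)| * ‖φ j‖ ≤ T * 1 * B := by gcongr; exact hφ j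
      _ = T * B := by ring
  have hmoment : ∑ j, p j * ‖x j‖ ^ 2 ≤ B ^ 2 * T ^ 2 :=
    calc ∑ j, p j * ‖x j‖ ^ 2 ≤ ∑ j, p j * (T * B) ^ 2 :=
          sum_le_sum fun j _ => mul_le_mul_of_nonneg_left
            (pow_le_pow_left₀ (norm_nonneg _) (hx j) 2) (by positivity)
      _ = B ^ 2 * T ^ 2 := by rw [← sum_mul, hp]; ring
  obtain ⟨g, hg⟩ :=
    exists_norm_inv_smul_sum_sub_sq_le (fun j => by positivity) hp x c hk
  refine ⟨fun j => (#{l | g l = j} : ℝ) * (T / k * SignType.sign (θ j)),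
    sparsity_card_fiber_mul_le g _, ?_⟩
  have hsample : ∑ j, ((#{l | g l = j} : ℝ) * (T / k * SignType.sign (θ j))) • φ j =
      (k : ℝ)⁻¹ • ∑ l, x (g l) := by
    rw [sum_card_fiber_mul_smul, smul_sum]
    refine sum_congr rfl fun l _ => ?_
    rw [smul_smul]
    ring_nf
  rw [hsample, ← hmean]
  exact hg.trans (by gcongr)

end Sparsification

theorem maurey_argument_general
    {n M : ℕ} (hn : 0 < n) {k : ℕ} (hk : 1 ≤ k)
    (φ : Fin M → Fin n → ℝ) (D : ℝ)
    (hD : ∀ j, Real.sqrt (∑ i, φ j i ^ 2) ≤ D * Real.sqrt (n : ℝ))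
    (f : Fin n → ℝ) (R : ℝ) (hR : 0 < R) :
    sInf {y : ℝ | ∃ θ : Fin M → ℝ, sparsity θ ≤ k ∧
        y = (1 / n : ℝ) * ∑ i, ((∑ j, θ j * φ j i) - f i) ^ 2} ≤
      sInf {y : ℝ | ∃ θ : Fin M → ℝ, (∑ j, |θ j|) ≤ R ∧
        y = (1 / n : ℝ) * ∑ i, ((∑ j, θ j * φ j i) - f i) ^ 2} +
        D ^ 2 * R ^ 2 / k := by
  set ψ : Fin M → EuclideanSpace ℝ (Fin n) := fun j => WithLp.toLp 2 (φ j)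
  have hψ : ∀ j, ‖ψ j‖ ≤ D * √n := fun j => by
    simpa [ψ, EuclideanSpace.norm_eq] using hD j
  have herr : ∀ θ : Fin M → ℝ, ∑ i, ((∑ j, θ j * φ j i) - f i) ^ 2 =
      ‖∑ j, θ j • ψ j - WithLp.toLp 2 f‖ ^ 2 := fun θ => by
    simp [EuclideanSpace.real_norm_sq_eq, ψ]
  have hbdd : BddBelow {y : ℝ | ∃ θ : Fin M → ℝ, sparsity θ ≤ k ∧
      y = (1 / n : ℝ) * ∑ i, ((∑ j, θ j * φ j i) - f i) ^ 2} :=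
    ⟨0, by rintro _ ⟨θ, -, rfl⟩; positivity⟩
  rw [← sub_le_iff_le_add]
  refine le_csInf ⟨_, 0, by simpa using hR.le, rfl⟩ ?_
  rintro _ ⟨θ, hθR, rfl⟩
  rw [sub_le_iff_le_add]
  obtain ⟨θ', hθ'k, hθ'⟩ := exists_sparsity_le_norm_sum_smul_sub_sq_le
    (Nat.one_le_iff_ne_zero.mp hk) ψ hψ θ (WithLp.toLp 2 f)
  have hn' : (0 : ℝ) < n := Nat.cast_pos.mpr hn
  calc _ ≤ _ := csInf_le hbdd ⟨θ', hθ'k, rfl⟩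
    _ ≤ (1 / n : ℝ) * (‖∑ j, θ j • ψ j - WithLp.toLp 2 f‖ ^ 2
          + (D * √n) ^ 2 * (∑ j, |θ j|) ^ 2 / k) := by
        rw [herr]; gcongr
    _ = (1 / n : ℝ) * ∑ i, ((∑ j, θ j * φ j i) - f i) ^ 2 + D ^ 2 * (∑ j, |θ j|) ^ 2 / k := by
        rw [herr, mul_pow, Real.sq_sqrt hn'.le]
        field_simp
    _ ≤ _ := by gcongr

/-- Maurey's argument: for a dictionary normalized by `max_j |φ_j|₂ ≤ D√n`, the best
`k`-sparse approximation error is at most the best approximation error over the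
`ℓ₁`-ball of radius `R`, plus `D²R²/k`. -/
theorem maurey_argument
    {n M : ℕ} (hn : 0 < n) {k : ℕ} (hk : 1 ≤ k) (hkM : k ≤ M)
    (φ : Fin M → Fin n → ℝ) (D : ℝ)
    (hD : ∀ j, Real.sqrt (∑ i, φ j i ^ 2) ≤ D * Real.sqrt (n : ℝ))
    (f : Fin n → ℝ) (R : ℝ) (hR : 0 < R) :
    sInf {y : ℝ | ∃ θ : Fin M → ℝ, sparsity θ ≤ k ∧
        y = (1 / n : ℝ) * ∑ i, ((∑ j, θ j * φ j i) - f i) ^ 2} ≤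
      sInf {y : ℝ | ∃ θ : Fin M → ℝ, (∑ j, |θ j|) ≤ R ∧
        y = (1 / n : ℝ) * ∑ i, ((∑ j, θ j * φ j i) - f i) ^ 2} +
        D ^ 2 * R ^ 2 / k :=
  maurey_argument_general hn hk φ D hD f R hR
end

section
/- (Sparse Varshamov–Gilbert lemma.) For any two integers k and d with 1 ≤ k ≤ d/8, there exist binary vectors ω₁, …, ω_M ∈ {0,1}^d such that: (i) the Hamming distance satisfies ρ(ωᵢ, ωⱼ) ≥ k/2 for all i ≠ j; (ii) log M ≥ (k/8) log(1 + d/(2k)); and (iii) each ωⱼ has exactly k nonzero coordinates, i.e., |ωⱼ|₀ = k. -/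
/-! Write `m = ⌊d/k⌋`. One-hot encoding each letter of a word in `Fin m ^ k` into its own block
of `m` bits gives a word of length `d` with exactly `k` ones, and doubles Hamming distances. A
Gilbert–Varshamov code in `Fin m ^ k` of minimum distance `⌈k/4⌉` has `M` words with
`m ^ k ≤ M · 2 ^ k · m ^ (⌈k/4⌉ - 1)`; since `2 ≤ m ^ (1/3)` this gives
`log M ≥ (1 - 1/3 - 1/4) k log m ≥ (k/8) log m`, and `1 + d/(2k) ≤ m` because `m ≥ 8`. -/

open Finset Function

section HammingCodes

variable {ι β : Type*} [Fintype ι] [DecidableEq ι] [Fintype β] [DecidableEq β]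

lemma card_filter_eqOn_compl_le (c : ι → β) (T : Finset ι) :
    #{v : ι → β | ∀ i ∉ T, v i = c i} ≤ Fintype.card β ^ #T := by
  calc #{v : ι → β | ∀ i ∉ T, v i = c i} ≤ #(univ : Finset (T → β)) := by
        refine card_le_card_of_injOn (fun v (i : T) => v i) (fun _ _ => mem_coe.2 (mem_univ _)) ?_
        intro v hv v' hv' hvv'
        simp only [coe_filter, mem_univ, true_and, Set.mem_ofPred_eq] at hv hv'
        funext i
        by_cases hi : i ∈ T
        · exact congrFun hvv' ⟨i, hi⟩
        · rw [hv i hi, hv' i hi]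
    _ = Fintype.card β ^ #T := by simp

/-- Choose the coordinates where `v` differs from `c`, then the values of `v` there. -/
lemma card_filter_hammingDist_le_le [Nonempty β] (c : ι → β) (s : ℕ) :
    #{v : ι → β | hammingDist v c ≤ s} ≤ 2 ^ Fintype.card ι * Fintype.card β ^ s := by
  set supports := {T ∈ (univ : Finset ι).powerset | #T ≤ s}
  have cover : ({v | hammingDist v c ≤ s} : Finset (ι → β)) ⊆
      supports.biUnion fun T => {v : ι → β | ∀ i ∉ T, v i = c i} := by
    intro v hv
    rw [mem_filter_univ] at hv
    refine mem_biUnion.2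
      ⟨({i | v i ≠ c i} : Finset ι), by simpa [supports, hammingDist] using hv, ?_⟩
    simp
  calc _ ≤ ∑ T ∈ supports, #{v : ι → β | ∀ i ∉ T, v i = c i} :=
        (card_le_card cover).trans card_biUnion_le
    _ ≤ ∑ T ∈ supports, Fintype.card β ^ s := sum_le_sum fun T hT =>
        (card_filter_eqOn_compl_le c T).trans
          (Nat.pow_le_pow_right Fintype.card_pos (mem_filter.1 hT).2)
    _ ≤ 2 ^ Fintype.card ι * Fintype.card β ^ s := by
        rw [sum_const, smul_eq_mul]
        gcongr
        exact (card_filter_le _ _).trans (by simp)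

lemma exists_pairwise_le_hammingDist_forall_exists_lt {r : ℕ} (hr : 0 < r) :
    ∃ C : Finset (ι → β), (C : Set (ι → β)).Pairwise (r ≤ hammingDist · ·) ∧
      ∀ v, ∃ c ∈ C, hammingDist v c < r := by
  obtain ⟨C, hC, hmax⟩ := exists_max_image
    {C : Finset (ι → β) | (C : Set (ι → β)).Pairwise (r ≤ hammingDist · ·)} card
    ⟨∅, by simp⟩
  rw [mem_filter_univ] at hC
  refine ⟨C, hC, fun v => ?_⟩
  by_contra! hfar
  have hv : v ∉ C := fun hv => by simpa [hammingDist_self] using (hfar v hv).trans_lt' hr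
  have hsep : (insert v (C : Set (ι → β))).Pairwise (r ≤ hammingDist · ·) := by
    rw [Set.pairwise_insert]
    exact ⟨hC, fun c hc _ => ⟨hfar c hc, hammingDist_comm v c ▸ hfar c hc⟩⟩
  have := hmax (insert v C) ((mem_filter_univ _).2 (by rwa [coe_insert]))
  rw [card_insert_of_notMem hv] at this
  omega

/-- The Gilbert–Varshamov bound. -/
theorem exists_pairwise_le_hammingDist_card_mul_ge [Nonempty β] {r : ℕ} (hr : 0 < r) :
    ∃ C : Finset (ι → β), (C : Set (ι → β)).Pairwise (r ≤ hammingDist · ·) ∧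
      Fintype.card β ^ Fintype.card ι ≤
        #C * (2 ^ Fintype.card ι * Fintype.card β ^ (r - 1)) := by
  obtain ⟨C, hC, hcover⟩ :=
    exists_pairwise_le_hammingDist_forall_exists_lt (ι := ι) (β := β) hr
  refine ⟨C, hC, ?_⟩
  calc Fintype.card β ^ Fintype.card ι = #(univ : Finset (ι → β)) := by simp
    _ ≤ #(C.biUnion fun c => {v : ι → β | hammingDist v c ≤ r - 1}) :=
      card_le_card fun v _ => by
        obtain ⟨c, hc, hvc⟩ := hcover v
        exact mem_biUnion.2 ⟨c, hc, (mem_filter_univ _).2 (by omega)⟩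
    _ ≤ ∑ c ∈ C, #{v : ι → β | hammingDist v c ≤ r - 1} := card_biUnion_le
    _ ≤ #C * (2 ^ Fintype.card ι * Fintype.card β ^ (r - 1)) := by
        simpa using sum_le_sum fun c (_ : c ∈ C) => card_filter_hammingDist_le_le c (r - 1)

end HammingCodes

section OneHot

variable {ι β : Type*} [Fintype ι] [Fintype β] [DecidableEq β]

def oneHot (u : ι → β) (p : ι × β) : Bool := u p.1 = p.2

lemma card_oneHot_eq_true (u : ι → β) : #{p | oneHot u p = true} = Fintype.card ι := by
  have : ({p | oneHot u p = true} : Finset (ι × β)) =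
      univ.map ⟨fun i => (i, u i), fun i j h => (Prod.mk.inj h).1⟩ := by
    ext ⟨i, b⟩
    simp only [oneHot, decide_eq_true_eq, mem_filter_univ, mem_map, mem_univ, true_and]
    constructor
    · rintro rfl
      exact ⟨i, rfl⟩
    · rintro ⟨a, h⟩
      cases h
      rfl
  rw [this, card_map, card_univ]

lemma card_decide_eq_ne_decide_eq (x y : β) :
    #{b | decide (x = b) ≠ decide (y = b)} = if x = y then 0 else 2 := by
  split_ifs with hxy
  · simp [hxy]
  · have : ({b | decide (x = b) ≠ decide (y = b)} : Finset β) = {x, y} := by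
      ext b
      by_cases hx : x = b <;> by_cases hy : y = b <;> simp_all [eq_comm]
    rw [this, card_pair hxy]

lemma hammingDist_oneHot (u v : ι → β) :
    hammingDist (oneHot u) (oneHot v) = 2 * hammingDist u v := by
  simp only [hammingDist, card_filter, Fintype.sum_prod_type, mul_sum]
  refine sum_congr rfl fun i _ => ?_
  rw [← card_filter]
  simpa [oneHot, ite_not, mul_comm] using card_decide_eq_ne_decide_eq (u i) (v i)

end OneHot

section Extend

variable {α β γ : Type*} [Fintype α] [Fintype γ] [DecidableEq β] {e : α → γ}

lemma hammingDist_extend (he : Injective e) (x y : α → β) (g : γ → β) :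
    hammingDist (extend e x g) (extend e y g) = hammingDist x y := by
  have : ({j | extend e x g j ≠ extend e y g j} : Finset γ) =
      ({a | x a ≠ y a} : Finset α).map ⟨e, he⟩ := by
    ext j
    by_cases hj : ∃ a, e a = j
    · obtain ⟨a, rfl⟩ := hj
      simp [he.extend_apply]
    · simp only [extend_apply' _ _ _ hj, ne_eq, not_true_eq_false, mem_filter_univ,
        false_iff, mem_map, Embedding.coeFn_mk, not_exists, not_and]
      exact fun a _ hja => hj ⟨a, hja⟩
  rw [hammingDist, hammingDist, this, card_map]

lemma card_extend_false_eq_true (he : Injective e) (x : α → Bool) :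
    #{j | extend e x (fun _ => false) j = true} = #{a | x a = true} := by
  have key := hammingDist_extend he x (fun _ => false) (fun _ => false)
  rw [extend_const] at key
  simpa [hammingDist] using key

end Extend

lemma mul_log_div_eight_le_log {m M : ℝ} {k s : ℕ} (hm : 8 ≤ m) (hM : 0 ≤ M)
    (hs : 4 * s ≤ k) (h : m ^ k ≤ M * (2 ^ k * m ^ s)) : k / 8 * Real.log m ≤ Real.log M := by
  have hMpos : 0 < M := by
    refine hM.lt_of_ne fun hM0 => ?_
    rw [← hM0, zero_mul] at h
    linarith [pow_pos (by linarith : (0 : ℝ) < m) k]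
  have hlog := Real.log_le_log (by positivity) h
  rw [Real.log_mul hMpos.ne' (by positivity), Real.log_mul (by positivity) (by positivity),
    Real.log_pow, Real.log_pow, Real.log_pow] at hlog
  have hlog2 : 3 * Real.log 2 ≤ Real.log m := by
    rw [← Real.log_rpow two_pos]
    exact Real.log_le_log (by positivity) (by norm_num; linarith)
  have hsk : (4 * s : ℝ) ≤ k := by exact_mod_cast hs
  have hL : 0 ≤ Real.log m := Real.log_nonneg (by linarith)
  nlinarith [mul_nonneg (Nat.cast_nonneg k) (sub_nonneg.2 hlog2),
    mul_nonneg (sub_nonneg.2 hsk) hL]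

lemma one_add_div_two_mul_le_div {k d : ℕ} (hk : 0 < k) (hkd : 8 * k ≤ d) :
    1 + (d : ℝ) / (2 * k) ≤ (d / k : ℕ) := by
  have hm : 8 ≤ d / k := (Nat.le_div_iff_mul_le hk).2 hkd
  have hnat : d + 2 * k ≤ 2 * (k * (d / k)) := by
    have := Nat.div_add_mod d k
    have := Nat.mod_lt d hk
    have := Nat.mul_le_mul_left k hm
    omega
  have hreal : (d : ℝ) + 2 * k ≤ 2 * (k * (d / k : ℕ)) := by exact_mod_cast hnat
  have : (d : ℝ) / (2 * k) ≤ (d / k : ℕ) - 1 := by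
    rw [div_le_iff₀ (by positivity)]
    linarith
  linarith

/-- Sparse Varshamov–Gilbert lemma: for `1 ≤ k ≤ d/8` there exist `M` binary vectors
in `{0,1}^d`, each with exactly `k` ones, pairwise at Hamming distance at least `k/2`,
with `log M ≥ (k/8) log(1 + d/(2k))`. -/
theorem sparse_varshamov_gilbert (k d : ℕ) (hk : 1 ≤ k) (hkd : 8 * k ≤ d) :
    ∃ M : ℕ, ∃ w : Fin M → Fin d → Bool,
      (∀ i j, i ≠ j → (k : ℝ) / 2 ≤ (hammingDist (w i) (w j) : ℝ)) ∧
      ((k : ℝ) / 8 * Real.log (1 + (d : ℝ) / (2 * k)) ≤ Real.log (M : ℝ)) ∧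
      (∀ j, (Finset.univ.filter fun i => w j i = true).card = k) := by
  set m := d / k
  have hm : 8 ≤ m := (Nat.le_div_iff_mul_le hk).2 hkd
  have : Nonempty (Fin m) := ⟨⟨0, by omega⟩⟩
  obtain ⟨C, hC, hcard⟩ :=
    exists_pairwise_le_hammingDist_card_mul_ge (ι := Fin k) (β := Fin m) (r := (k + 3) / 4)
      (by omega)
  simp only [Fintype.card_fin] at hcard
  set e : Fin k × Fin m → Fin d := Fin.castLE (Nat.mul_div_le d k) ∘ finProdFinEquiv
  have he : Injective e := (Fin.castLE_injective _).comp finProdFinEquiv.injective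
  refine ⟨#C, fun i => extend e (oneHot (C.equivFin.symm i : Fin k → Fin m)) fun _ => false,
    fun i j hij => ?_, ?_, fun j => ?_⟩
  · have hsep : (k + 3) / 4 ≤
        hammingDist (C.equivFin.symm i : Fin k → Fin m) (C.equivFin.symm j) :=
      hC (C.equivFin.symm i).2 (C.equivFin.symm j).2
        (by simpa [Subtype.ext_iff] using C.equivFin.symm.injective.ne hij)
    rw [hammingDist_extend he, hammingDist_oneHot, div_le_iff₀ two_pos]
    exact_mod_cast (by omega : k ≤ 2 * hammingDist _ _ * 2)
  · calc (k : ℝ) / 8 * Real.log (1 + d / (2 * k)) ≤ k / 8 * Real.log m := by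
          gcongr
          exact one_add_div_two_mul_le_div hk hkd
      _ ≤ Real.log #C := mul_log_div_eight_le_log (s := (k + 3) / 4 - 1)
          (by exact_mod_cast hm) (Nat.cast_nonneg _) (by omega) (by exact_mod_cast hcard)
  · rw [card_extend_false_eq_true he, card_oneHot_eq_true, Fintype.card_fin]
end

section
/- (Davis–Kahan sin(θ) theorem for leading eigenvectors.) Let A, B be two d×d real symmetric positive semidefinite matrices with eigenvalue–eigenvector pairs (λ₁, u₁), …, (λ_d, u_d) for A and (μ₁, v₁), …, (μ_d, v_d) for B, ordered so that λ₁ ≥ λ₂ ≥ … and μ₁ ≥ μ₂ ≥ …, with all eigenvectors of unit norm. Assume max(λ₁ − λ₂, μ₁ − μ₂) > 0. Then sin(∠(u₁, v₁)) ≤ 2‖A − B‖_op / max(λ₁ − λ₂, μ₁ − μ₂), where ∠(u, v) = arccos(|uᵀv|) is the principal angle. Moreover, min_{ε ∈ {±1}} |ε u₁ − v₁|₂² ≤ 2 sin²(∠(u₁, v₁)). -/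
open Matrix

/-- The operator (spectral) norm of a matrix. -/
noncomputable def opNorm {d : ℕ} (A : Matrix (Fin d) (Fin d) ℝ) : ℝ :=
  ⨆ v : {v : Fin d → ℝ // ∑ a, v a ^ 2 ≤ 1},
    Real.sqrt (∑ a, (A.mulVec (v : Fin d → ℝ) a) ^ 2)

/-
Write `E = ‖A - B‖` and `δ = λ₁ - λ₂`; if `2E ≥ δ` the bound is at least `1`, so let `2E < δ`.
The Rayleigh quotient of `B` is at most `μ₁`; comparing it with that of `A` at `u₁` gives
`μ₁ ≥ λ₁ - E`, hence `μ₁ - λᵢ > δ / 2` for all `i ≥ 2`. In the eigenbasis of `A` the coordinates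
of `(A - B) v₁` are `(λᵢ - μ₁) ⟨uᵢ, v₁⟩`; by Parseval their squares sum to at most `E²`, while the
squares of `⟨uᵢ, v₁⟩` for `i ≥ 2` sum to `sin² ∠(u₁, v₁)`. So `(δ / 2)² sin² ∠ ≤ E²`.
Exchanging `A` and `B` gives the bound with the gap of `B`. For the second claim,
`|±u₁ - v₁|² = 2 ∓ 2 ⟨u₁, v₁⟩`, whose minimum `2 - 2 |⟨u₁, v₁⟩|` is at most `2 (1 - ⟨u₁, v₁⟩²)`.
-/

lemma sq_dotProduct_le_dotProduct_self_mul {ι : Type*} [Fintype ι] (x y : ι → ℝ) :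
    (x ⬝ᵥ y) ^ 2 ≤ (x ⬝ᵥ x) * (y ⬝ᵥ y) := by
  simpa only [dotProduct, sq] using Finset.sum_mul_sq_le_sq_mul_sq Finset.univ x y

section OpNorm

variable {n : ℕ} (M : Matrix (Fin n) (Fin n) ℝ)

lemma opNorm_bddAbove :
    BddAbove (Set.range fun x : {x : Fin n → ℝ // ∑ a, x a ^ 2 ≤ 1} =>
      Real.sqrt (∑ a, (M *ᵥ (x : Fin n → ℝ)) a ^ 2)) := by
  refine ⟨Real.sqrt (∑ a, ∑ b, M a b ^ 2), ?_⟩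
  rintro _ ⟨⟨x, hx⟩, rfl⟩
  refine Real.sqrt_le_sqrt (Finset.sum_le_sum fun a _ => ?_)
  calc (M *ᵥ x) a ^ 2 ≤ (∑ b, M a b ^ 2) * ∑ b, x b ^ 2 :=
        Finset.sum_mul_sq_le_sq_mul_sq Finset.univ (M a) x
    _ ≤ ∑ b, M a b ^ 2 :=
        mul_le_of_le_one_right (Finset.sum_nonneg fun b _ => sq_nonneg _) hx

lemma opNorm_nonneg : 0 ≤ opNorm M :=
  (Real.sqrt_nonneg _).trans (le_ciSup (opNorm_bddAbove M) ⟨0, by simp⟩)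

lemma dotProduct_mulVec_self_le_opNorm_sq {x : Fin n → ℝ} (hx : x ⬝ᵥ x ≤ 1) :
    M *ᵥ x ⬝ᵥ M *ᵥ x ≤ opNorm M ^ 2 := by
  have hx' : ∑ a, x a ^ 2 ≤ 1 := by simpa only [dotProduct, sq] using hx
  have hle : Real.sqrt (∑ a, (M *ᵥ x) a ^ 2) ≤ opNorm M := le_ciSup (opNorm_bddAbove M) ⟨x, hx'⟩
  rw [Real.sqrt_le_left (opNorm_nonneg M)] at hle
  simpa only [dotProduct, sq] using hle

lemma dotProduct_mulVec_le_opNorm {x : Fin n → ℝ} (hx : x ⬝ᵥ x = 1) :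
    x ⬝ᵥ M *ᵥ x ≤ opNorm M := by
  refine le_of_sq_le_sq ?_ (opNorm_nonneg M)
  calc (x ⬝ᵥ M *ᵥ x) ^ 2 ≤ (x ⬝ᵥ x) * (M *ᵥ x ⬝ᵥ M *ᵥ x) :=
        sq_dotProduct_le_dotProduct_self_mul _ _
    _ ≤ opNorm M ^ 2 := by
        rw [hx, one_mul]
        exact dotProduct_mulVec_self_le_opNorm_sq M hx.le

lemma opNorm_sub_comm (A B : Matrix (Fin n) (Fin n) ℝ) : opNorm (A - B) = opNorm (B - A) := by
  simp only [opNorm, ← neg_sub B A, neg_mulVec, Pi.neg_apply, neg_sq]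

end OpNorm

section Eigenbasis

variable {ι : Type*} [Fintype ι]

lemma dotProduct_mulVec_of_mulVec_eq_smul {A : Matrix ι ι ℝ} (hA : A.IsSymm) {w : ι → ℝ}
    {l : ℝ} (hw : A *ᵥ w = l • w) (x : ι → ℝ) : w ⬝ᵥ A *ᵥ x = l * (w ⬝ᵥ x) := by
  rw [dotProduct_mulVec, ← mulVec_transpose, hA.eq, hw, smul_dotProduct, smul_eq_mul]

variable [DecidableEq ι]

lemma sum_dotProduct_mul_dotProduct {u : ι → ι → ℝ}
    (hu : ∀ i j, u i ⬝ᵥ u j = if i = j then (1 : ℝ) else 0) (x y : ι → ℝ) :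
    ∑ i, (u i ⬝ᵥ x) * (u i ⬝ᵥ y) = x ⬝ᵥ y := by
  have hUUt : of u * (of u)ᵀ = 1 := by
    ext i j
    simpa [mul_apply, dotProduct, one_apply] using hu i j
  calc ∑ i, (u i ⬝ᵥ x) * (u i ⬝ᵥ y) = of u *ᵥ x ⬝ᵥ of u *ᵥ y := rfl
    _ = (of u)ᵀ *ᵥ (of u *ᵥ x) ⬝ᵥ y := by rw [dotProduct_mulVec, mulVec_transpose]
    _ = x ⬝ᵥ y := by rw [mulVec_mulVec, mul_eq_one_comm.mp hUUt, one_mulVec]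

lemma sum_sq_dotProduct {u : ι → ι → ℝ}
    (hu : ∀ i j, u i ⬝ᵥ u j = if i = j then (1 : ℝ) else 0) (x : ι → ℝ) :
    ∑ i, (u i ⬝ᵥ x) ^ 2 = x ⬝ᵥ x := by
  simpa only [sq] using sum_dotProduct_mul_dotProduct hu x x

lemma one_sub_sq_dotProduct_eq_sum_erase {u : ι → ι → ℝ}
    (hu : ∀ i j, u i ⬝ᵥ u j = if i = j then (1 : ℝ) else 0) {x : ι → ℝ} (hx : x ⬝ᵥ x = 1)
    (i₀ : ι) : 1 - (u i₀ ⬝ᵥ x) ^ 2 = ∑ i ∈ Finset.univ.erase i₀, (u i ⬝ᵥ x) ^ 2 := by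
  rw [← hx, ← sum_sq_dotProduct hu, ← Finset.add_sum_erase _ _ (Finset.mem_univ i₀),
    add_sub_cancel_left]

lemma sq_mul_one_sub_sq_dotProduct_le {u : ι → ι → ℝ}
    (hu : ∀ i j, u i ⬝ᵥ u j = if i = j then (1 : ℝ) else 0) {x : ι → ℝ} (hx : x ⬝ᵥ x = 1)
    {lam : ι → ℝ} {m g : ℝ} (i₀ : ι) (hg0 : 0 ≤ g) (hg : ∀ i ≠ i₀, g ≤ m - lam i) :
    g ^ 2 * (1 - (u i₀ ⬝ᵥ x) ^ 2) ≤ ∑ i, ((lam i - m) * (u i ⬝ᵥ x)) ^ 2 :=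
  calc g ^ 2 * (1 - (u i₀ ⬝ᵥ x) ^ 2) = ∑ i ∈ Finset.univ.erase i₀, g ^ 2 * (u i ⬝ᵥ x) ^ 2 := by
        rw [one_sub_sq_dotProduct_eq_sum_erase hu hx, Finset.mul_sum]
    _ ≤ ∑ i ∈ Finset.univ.erase i₀, ((lam i - m) * (u i ⬝ᵥ x)) ^ 2 := by
        refine Finset.sum_le_sum fun i hi => ?_
        rw [mul_pow, ← neg_sub, neg_sq]
        have := hg i (Finset.ne_of_mem_erase hi)
        gcongr
    _ ≤ ∑ i, ((lam i - m) * (u i ⬝ᵥ x)) ^ 2 :=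
        Finset.sum_le_sum_of_subset_of_nonneg (Finset.erase_subset _ _)
          fun _ _ _ => sq_nonneg _

lemma dotProduct_mulVec_self_le {A : Matrix ι ι ℝ} (hA : A.IsSymm) {lam : ι → ℝ}
    {u : ι → ι → ℝ} (hu : ∀ i j, u i ⬝ᵥ u j = if i = j then (1 : ℝ) else 0)
    (hAu : ∀ i, A *ᵥ u i = lam i • u i) {m : ℝ} (hm : ∀ i, lam i ≤ m) (x : ι → ℝ) :
    x ⬝ᵥ A *ᵥ x ≤ m * (x ⬝ᵥ x) :=
  calc x ⬝ᵥ A *ᵥ x = ∑ i, lam i * (u i ⬝ᵥ x) ^ 2 := by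
        rw [← sum_dotProduct_mul_dotProduct hu]
        refine Finset.sum_congr rfl fun i _ => ?_
        rw [dotProduct_mulVec_of_mulVec_eq_smul hA (hAu i)]
        ring
    _ ≤ ∑ i, m * (u i ⬝ᵥ x) ^ 2 :=
        Finset.sum_le_sum fun i _ => mul_le_mul_of_nonneg_right (hm i) (sq_nonneg _)
    _ = m * (x ⬝ᵥ x) := by rw [← Finset.mul_sum, sum_sq_dotProduct hu]

end Eigenbasis

section Perturbation

variable {n : ℕ} {A B : Matrix (Fin n) (Fin n) ℝ}

lemma sub_opNorm_sub_le {mu : Fin n → ℝ} {v : Fin n → Fin n → ℝ} (hB : B.IsSymm)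
    (hv : ∀ i j, v i ⬝ᵥ v j = if i = j then (1 : ℝ) else 0) (hBv : ∀ i, B *ᵥ v i = mu i • v i)
    {m : ℝ} (hm : ∀ i, mu i ≤ m) {w : Fin n → ℝ} {l : ℝ} (hAw : A *ᵥ w = l • w)
    (hw : w ⬝ᵥ w = 1) : l - opNorm (A - B) ≤ m := by
  have hAB := dotProduct_mulVec_le_opNorm (A - B) hw
  have hRayleigh := dotProduct_mulVec_self_le hB hv hBv hm w
  rw [sub_mulVec, dotProduct_sub, hAw, dotProduct_smul, smul_eq_mul, hw] at hAB
  rw [hw] at hRayleigh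
  linarith

lemma sum_sq_sub_mul_dotProduct_le_opNorm_sq {lam : Fin n → ℝ} {u : Fin n → Fin n → ℝ}
    (hA : A.IsSymm) (hu : ∀ i j, u i ⬝ᵥ u j = if i = j then (1 : ℝ) else 0)
    (hAu : ∀ i, A *ᵥ u i = lam i • u i) {x : Fin n → ℝ} {m : ℝ} (hBx : B *ᵥ x = m • x)
    (hx : x ⬝ᵥ x = 1) : ∑ i, ((lam i - m) * (u i ⬝ᵥ x)) ^ 2 ≤ opNorm (A - B) ^ 2 := by
  have hcoord : ∀ i, u i ⬝ᵥ (A - B) *ᵥ x = (lam i - m) * (u i ⬝ᵥ x) := fun i => by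
    rw [sub_mulVec, dotProduct_sub, dotProduct_mulVec_of_mulVec_eq_smul hA (hAu i), hBx,
      dotProduct_smul, smul_eq_mul]
    ring
  simp only [← hcoord]
  rw [sum_sq_dotProduct hu]
  exact dotProduct_mulVec_self_le_opNorm_sq _ hx.le

end Perturbation

lemma sin_arccos_abs_dotProduct_le {n : ℕ} {A B : Matrix (Fin (n + 2)) (Fin (n + 2)) ℝ}
    {lam mu : Fin (n + 2) → ℝ} {u v : Fin (n + 2) → Fin (n + 2) → ℝ}
    (hA : A.IsSymm) (hB : B.IsSymm)
    (hu : ∀ i j, u i ⬝ᵥ u j = if i = j then (1 : ℝ) else 0)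
    (hv : ∀ i j, v i ⬝ᵥ v j = if i = j then (1 : ℝ) else 0)
    (hAu : ∀ i, A *ᵥ u i = lam i • u i) (hBv : ∀ i, B *ᵥ v i = mu i • v i)
    (hlam : Antitone lam) (hmu : Antitone mu) (hgap : 0 < lam 0 - lam 1) :
    Real.sin (Real.arccos |u 0 ⬝ᵥ v 0|) ≤ 2 * opNorm (A - B) / (lam 0 - lam 1) := by
  set E := opNorm (A - B)
  set δ := lam 0 - lam 1
  have hE : 0 ≤ E := opNorm_nonneg _
  have hu0 : u 0 ⬝ᵥ u 0 = 1 := by simpa using hu 0 0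
  have hv0 : v 0 ⬝ᵥ v 0 = 1 := by simpa using hv 0 0
  rw [Real.sin_arccos, sq_abs]
  rcases le_or_gt δ (2 * E) with hsmall | hlarge
  · exact (Real.sqrt_le_one.mpr (by nlinarith)).trans ((one_le_div hgap).mpr hsmall)
  · have hweyl : lam 0 - E ≤ mu 0 :=
      sub_opNorm_sub_le hB hv hBv (fun i => hmu (Fin.zero_le i)) (hAu 0) hu0
    have hsep : ∀ i ≠ 0, δ / 2 ≤ mu 0 - lam i := fun i hi => by
      have := hlam (Fin.one_le_of_ne_zero hi)
      linarith
    have hbound := (sq_mul_one_sub_sq_dotProduct_le hu hv0 0 (by positivity) hsep).trans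
      (sum_sq_sub_mul_dotProduct_le_opNorm_sq hA hu hAu (hBv 0) hv0)
    rw [Real.sqrt_le_left (by positivity), div_pow, le_div_iff₀ (by positivity)]
    nlinarith

lemma sum_sq_sub_eq_two_sub_two_mul_dotProduct {ι : Type*} [Fintype ι] {x y : ι → ℝ}
    (hx : x ⬝ᵥ x = 1) (hy : y ⬝ᵥ y = 1) : ∑ a, (x a - y a) ^ 2 = 2 - 2 * (x ⬝ᵥ y) := by
  have hsum : ∑ a, (x a - y a) ^ 2 = (x - y) ⬝ᵥ (x - y) := by simp [dotProduct, sq]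
  rw [hsum, sub_dotProduct, dotProduct_sub, dotProduct_sub, hx, hy, dotProduct_comm y x]
  ring

lemma min_two_sub_two_mul_le_two_mul_sin_arccos_sq {c : ℝ} (hc : c ^ 2 ≤ 1) :
    min (2 - 2 * c) (2 - 2 * -c) ≤ 2 * Real.sin (Real.arccos |c|) ^ 2 := by
  rw [Real.sin_arccos, sq_abs, Real.sq_sqrt (by linarith)]
  obtain ⟨hc₁, hc₂⟩ := abs_le_of_sq_le_sq' (by rwa [one_pow] : c ^ 2 ≤ (1 : ℝ) ^ 2) zero_le_one
  rcases le_total 0 c with h | h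
  · exact (min_le_left _ _).trans (by nlinarith)
  · exact (min_le_right _ _).trans (by nlinarith)

/-- Davis–Kahan `sin θ` theorem for leading eigenvectors of PSD matrices:
`sin ∠(u₁, v₁) ≤ 2‖A − B‖_op / max(λ₁ − λ₂, μ₁ − μ₂)`, and
`min_{ε = ±1} |ε u₁ − v₁|₂² ≤ 2 sin² ∠(u₁, v₁)`. -/
theorem davis_kahan_sin_theta
    {d : ℕ}
    (A B : Matrix (Fin (d + 2)) (Fin (d + 2)) ℝ)
    (hA : A.PosSemidef) (hB : B.PosSemidef)
    (lam mu : Fin (d + 2) → ℝ) (u v : Fin (d + 2) → Fin (d + 2) → ℝ)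
    (hu : ∀ i j, u i ⬝ᵥ u j = if i = j then (1 : ℝ) else 0)
    (hv : ∀ i j, v i ⬝ᵥ v j = if i = j then (1 : ℝ) else 0)
    (hAu : ∀ i, A.mulVec (u i) = lam i • u i)
    (hBv : ∀ i, B.mulVec (v i) = mu i • v i)
    (hlam : Antitone lam) (hmu : Antitone mu)
    (hgap : 0 < max (lam 0 - lam 1) (mu 0 - mu 1)) :
    Real.sin (Real.arccos |u 0 ⬝ᵥ v 0|) ≤
        2 * opNorm (A - B) / max (lam 0 - lam 1) (mu 0 - mu 1) ∧
      min (∑ a, (u 0 a - v 0 a) ^ 2) (∑ a, (-u 0 a - v 0 a) ^ 2) ≤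
        2 * Real.sin (Real.arccos |u 0 ⬝ᵥ v 0|) ^ 2 := by
  have hAs : A.IsSymm := isHermitian_iff_isSymm.mp hA.1
  have hBs : B.IsSymm := isHermitian_iff_isSymm.mp hB.1
  have hu0 : u 0 ⬝ᵥ u 0 = 1 := by simpa using hu 0 0
  have hv0 : v 0 ⬝ᵥ v 0 = 1 := by simpa using hv 0 0
  refine ⟨?_, ?_⟩
  · rcases le_total (mu 0 - mu 1) (lam 0 - lam 1) with h | h
    · rw [max_eq_left h] at hgap ⊢
      exact sin_arccos_abs_dotProduct_le hAs hBs hu hv hAu hBv hlam hmu hgap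
    · rw [max_eq_right h] at hgap ⊢
      rw [dotProduct_comm, opNorm_sub_comm]
      exact sin_arccos_abs_dotProduct_le hBs hAs hv hu hBv hAu hmu hlam hgap
  · have hsub := sum_sq_sub_eq_two_sub_two_mul_dotProduct hu0 hv0
    have hadd := sum_sq_sub_eq_two_sub_two_mul_dotProduct (x := -u 0)
      (by rw [neg_dotProduct_neg, hu0]) hv0
    simp only [Pi.neg_apply, neg_dotProduct] at hadd
    rw [hsub, hadd]
    refine min_two_sub_two_mul_le_two_mul_sin_arccos_sq ?_
    simpa [hu0, hv0] using sq_dotProduct_le_dotProduct_self_mul (u 0) (v 0)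
end
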